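/- arXiv:2311.06355 — 3 statements merged into one kernel-verified Lean document; each statement's English description precedes it below -/
import Mathlib

section
/- Let X, Y, Z be finite sets, H and K be Hilbert spaces, and E = (E_{x,x',y,y'}) ∈ M_X ⊗ M_Y ⊗ B(H), F = (F_{y,y',z,z'}) ∈ M_Y ⊗ M_Z ⊗ B(K) be stochastic operator matrices. Define G^τ_{x,x',z,z'} = Σ_{y,y'∈Y} E_{x,x',y,y'} ⊗ F_{y,y',z,z'}. Then G^τ = (G^τ_{x,x',z,z'}) is a stochastic operator matrix in M_X ⊗ M_Z ⊗ B(H ⊗ K). -/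
/-!
Let `Ê`, `F̂` be the block matrices of `E` and `F`. For each `y` let `V_y` send the basis vector
`(x, z, i, j)` to `((x, y, i), (y, z, j))`. Then the block matrix of `G^τ` is `V* (Ê ⊗ F̂) V` with
`V = Σ_y V_y`, a congruence of a Kronecker product of positive matrices, hence positive. For the
partial trace, summing over `z` first collapses `F_{y,y',z,z}` to `δ_{y,y'} I_K`, and then summing
over `y` collapses `E_{x,x',y,y}` to `δ_{x,x'} I_H`.
-/

open Matrix Kronecker ComplexOrder

/-- A stochastic operator matrix over `(X, A)` acting on `H = ℂ^n`: a family
`E = (E_{x,x',a,a'})` of operators on `H` which is positive as a block operator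
matrix (i.e. as an operator on `ℂ^{XA} ⊗ H`) and satisfies
`Tr_A E = I_X ⊗ I_H`, that is, `∑_a E_{x,x',a,a} = δ_{x,x'} I_H`. -/
def StochOpMat {X A n : Type*} [Fintype X] [Fintype A] [Fintype n] [DecidableEq X] [DecidableEq n]
    (E : X → X → A → A → Matrix n n ℂ) : Prop :=
  (Matrix.of fun p q : (X × A) × n => E p.1.1 q.1.1 p.1.2 q.1.2 p.2 q.2).PosSemidef ∧
    ∀ x x', (∑ a, E x x' a a) = if x = x' then (1 : Matrix n n ℂ) else 0

namespace Matrix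

section Kronecker

variable {α ι l m n p : Type*} [NonUnitalNonAssocSemiring α]

theorem kronecker_sum [Fintype n] (A : Matrix l m α) (s : Finset ι) (B : ι → Matrix n p α) :
    A ⊗ₖ (∑ i ∈ s, B i) = ∑ i ∈ s, A ⊗ₖ B i := by
  ext
  simp [sum_apply, Finset.mul_sum]

theorem sum_kronecker [Fintype l] (s : Finset ι) (A : ι → Matrix l m α) (B : Matrix n p α) :
    (∑ i ∈ s, A i) ⊗ₖ B = ∑ i ∈ s, A i ⊗ₖ B := by
  ext
  simp [sum_apply, Finset.sum_mul]

end Kronecker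

theorem PosSemidef.sum_sum_submatrix {R ι κ Y : Type*} [Ring R] [PartialOrder R] [StarRing R]
    [Fintype ι] [Fintype κ] [Fintype Y] {K : Matrix ι ι R} (hK : K.PosSemidef)
    (f : Y → κ → ι) : (∑ y, ∑ y', K.submatrix (f y) (f y')).PosSemidef := by
  classical
  set V : Matrix ι κ R := ∑ y, (1 : Matrix ι ι R).submatrix id (f y)
  have hV : Vᴴ * K * V = ∑ y, ∑ y', K.submatrix (f y) (f y') := by
    have h (y y' : Y) : ((1 : Matrix ι ι R).submatrix id (f y))ᴴ * K *
        (1 : Matrix ι ι R).submatrix id (f y') = K.submatrix (f y) (f y') := by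
      ext
      simp [mul_apply, one_apply]
    simp only [V, conjTranspose_sum, Matrix.sum_mul, Matrix.mul_sum, h]
    exact Finset.sum_comm
  exact hV ▸ hK.conjTranspose_mul_mul_same V

end Matrix

section TwistedComposition

variable {X Y Z n m : Type*}

/-- The matrix whose positivity `StochOpMat E` asks for. -/
def blockOperator {α : Type*} (E : X → X → Y → Y → Matrix n n α) :
    Matrix ((X × Y) × n) ((X × Y) × n) α :=
  Matrix.of fun p q => E p.1.1 q.1.1 p.1.2 q.1.2 p.2 q.2

def twistedComp {α : Type*} [NonUnitalNonAssocSemiring α] [Fintype Y]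
    (E : X → X → Y → Y → Matrix n n α) (F : Y → Y → Z → Z → Matrix m m α) :
    X → X → Z → Z → Matrix (n × m) (n × m) α :=
  fun x x' z z' => ∑ y, ∑ y', E x x' y y' ⊗ₖ F y y' z z'

theorem posSemidef_blockOperator_twistedComp {𝕜 : Type*} [RCLike 𝕜]
    [Fintype X] [Fintype Y] [Fintype Z] [Fintype n] [Fintype m]
    {E : X → X → Y → Y → Matrix n n 𝕜} {F : Y → Y → Z → Z → Matrix m m 𝕜}
    (hE : (blockOperator E).PosSemidef) (hF : (blockOperator F).PosSemidef) :
    (blockOperator (twistedComp E F)).PosSemidef := by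
  let ι (y : Y) (p : (X × Z) × n × m) : ((X × Y) × n) × ((Y × Z) × m) :=
    (((p.1.1, y), p.2.1), ((y, p.1.2), p.2.2))
  have hG : blockOperator (twistedComp E F)
      = ∑ y, ∑ y', (blockOperator E ⊗ₖ blockOperator F).submatrix (ι y) (ι y') := by
    ext
    simp [blockOperator, twistedComp, ι, Matrix.sum_apply]
  exact hG ▸ (hE.kronecker hF).sum_sum_submatrix ι

theorem sum_twistedComp_diag {α : Type*} [NonAssocSemiring α]
    [Fintype Y] [Fintype Z] [Fintype n] [Fintype m]
    [DecidableEq X] [DecidableEq Y] [DecidableEq n] [DecidableEq m]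
    {E : X → X → Y → Y → Matrix n n α} {F : Y → Y → Z → Z → Matrix m m α}
    (hE : ∀ x x', ∑ y, E x x' y y = if x = x' then 1 else 0)
    (hF : ∀ y y', ∑ z, F y y' z z = if y = y' then 1 else 0) (x x' : X) :
    ∑ z, twistedComp E F x x' z z = if x = x' then 1 else 0 := by
  calc ∑ z, twistedComp E F x x' z z
      = ∑ y, ∑ y', E x x' y y' ⊗ₖ ∑ z, F y y' z z := by
        simp only [twistedComp, kronecker_sum]
        exact Finset.sum_comm.trans (Finset.sum_congr rfl fun _ _ => Finset.sum_comm)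
    _ = ∑ y, E x x' y y ⊗ₖ (1 : Matrix m m α) := by
        simp [hF, apply_ite]
    _ = (∑ y, E x x' y y) ⊗ₖ (1 : Matrix m m α) := (sum_kronecker _ _ _).symm
    _ = if x = x' then 1 else 0 := by
        split_ifs with h <;> simp [hE, h]

end TwistedComposition

theorem stmt4_general {X Y Z n m : Type*} [Fintype X] [Fintype Y] [Fintype Z] [Fintype n] [Fintype m] [DecidableEq n] [DecidableEq m]
    [DecidableEq X] [DecidableEq Y]
    (E : X → X → Y → Y → Matrix n n ℂ) (F : Y → Y → Z → Z → Matrix m m ℂ)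
    (hE : StochOpMat E) (hF : StochOpMat F) :
    StochOpMat (fun x x' z z' => ∑ y, ∑ y', (E x x' y y') ⊗ₖ (F y y' z z')) :=
  ⟨posSemidef_blockOperator_twistedComp hE.1 hF.1, sum_twistedComp_diag hE.2 hF.2⟩

/-- the twisted composition
`G^τ_{x,x',z,z'} = Σ_{y,y'} E_{x,x',y,y'} ⊗ F_{y,y',z,z'}` of stochastic operator
matrices `E` (on `H`) and `F` (on `K`) is a stochastic operator matrix on `H ⊗ K`. -/
theorem stmt4 {X Y Z n m : Type*} [Fintype X] [Fintype Y] [Fintype Z] [Fintype n] [Fintype m] [DecidableEq n] [DecidableEq m]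
    [DecidableEq X] [DecidableEq Y] [DecidableEq Z]
    (E : X → X → Y → Y → Matrix n n ℂ) (F : Y → Y → Z → Z → Matrix m m ℂ)
    (hE : StochOpMat E) (hF : StochOpMat F) :
    StochOpMat (fun x x' z z' => ∑ y, ∑ y', (E x x' y y') ⊗ₖ (F y y' z z')) :=
  stmt4_general E F hE hF
end

section
/- Let H₁, H₂, K₁, K₂ be finite-dimensional Hilbert spaces, 𝒰₁ ⊆ H₁ ⊗ overline{K₁} and 𝒰₂ ⊆ overline{H₂} ⊗ K₂ subspaces, and ζ ∈ H₁ ⊗ overline{K₁} ⊗ overline{H₂} ⊗ K₂. Then the following are equivalent: (a) L_{ū₁}(ζ) ∈ 𝒰₂ for all u₁ ∈ 𝒰₁ and L_{ū₂}(ζ) ∈ 𝒰₁ for all u₂ ∈ 𝒰₂; (b) ζ ∈ (𝒰₁ ⊗ 𝒰₂) + (𝒰₁^⊥ ⊗ 𝒰₂^⊥). -/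
/-!
Let `P₁, P₂` be the orthogonal projections onto `𝒰₁, 𝒰₂` and `Q = 1 - P`. Every `ζ` splits as
`(P₁ ⊗ P₂) ζ + (P₁ ⊗ Q₂) ζ + (Q₁ ⊗ P₂) ζ + (Q₁ ⊗ Q₂) ζ`, and (b) says exactly that the two mixed
terms vanish. As `P₁` is self-adjoint, `L_{ū}((P₁ ⊗ Q₂) ζ) = Q₂ (L_{P₁u} ζ)`, and in finite
dimension a tensor all of whose slices vanish is zero; hence `(P₁ ⊗ Q₂) ζ = 0` iff
`L_{ū₁} ζ ∈ 𝒰₂` for all `u₁ ∈ 𝒰₁`, and symmetrically for `(Q₁ ⊗ P₂) ζ`.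
-/

open scoped TensorProduct

/-- The slice map `L_{ū₁} : V ⊗ W → W`, `v ⊗ w ↦ ⟨v, u₁⟩ w`. -/
noncomputable def sliceL {V W : Type*} [NormedAddCommGroup V] [InnerProductSpace ℂ V]
    [NormedAddCommGroup W] [InnerProductSpace ℂ W] (u : V) :
    TensorProduct ℂ V W →ₗ[ℂ] W :=
  TensorProduct.lift
    { toFun := fun v => (inner ℂ u v : ℂ) • (LinearMap.id : W →ₗ[ℂ] W)
      map_add' := by intros; simp [inner_add_right, add_smul]
      map_smul' := by intros; simp [inner_smul_right, smul_smul] }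

/-- The slice map `L_{ū₂} : V ⊗ W → V`, `v ⊗ w ↦ ⟨w, u₂⟩ v`. -/
noncomputable def sliceR {V W : Type*} [NormedAddCommGroup V] [InnerProductSpace ℂ V]
    [NormedAddCommGroup W] [InnerProductSpace ℂ W] (u : W) :
    TensorProduct ℂ V W →ₗ[ℂ] V :=
  (sliceL u).comp (TensorProduct.comm ℂ V W).toLinearMap

open TensorProduct

section Projections

variable {𝕜 E F : Type*} [RCLike 𝕜] [NormedAddCommGroup E] [InnerProductSpace 𝕜 E]
    [NormedAddCommGroup F] [InnerProductSpace 𝕜 F]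

lemma Submodule.starProjection_add_starProjection_orthogonal_eq_id (U : Submodule 𝕜 E)
    [U.HasOrthogonalProjection] :
    (U.starProjection : E →ₗ[𝕜] E) + (Uᗮ.starProjection : E →ₗ[𝕜] E) = LinearMap.id := by
  ext v
  exact U.starProjection_add_starProjection_orthogonal v

lemma Submodule.starProjection_comp_subtype_orthogonal (U : Submodule 𝕜 E)
    [U.HasOrthogonalProjection] : (U.starProjection : E →ₗ[𝕜] E) ∘ₗ Uᗮ.subtype = 0 := by
  ext v
  exact U.starProjection_apply_eq_zero_iff.mpr v.2

lemma Submodule.starProjection_orthogonal_comp_subtype (U : Submodule 𝕜 E)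
    [U.HasOrthogonalProjection] : (Uᗮ.starProjection : E →ₗ[𝕜] E) ∘ₗ U.subtype = 0 := by
  ext v
  exact U.starProjection_orthogonal_apply_eq_zero v.2

lemma TensorProduct.map_starProjection_mem_range_map_subtype (U₁ : Submodule 𝕜 E)
    [U₁.HasOrthogonalProjection] (U₂ : Submodule 𝕜 F) [U₂.HasOrthogonalProjection]
    (ζ : E ⊗[𝕜] F) :
    map (U₁.starProjection : E →ₗ[𝕜] E) (U₂.starProjection : F →ₗ[𝕜] F) ζ ∈
      LinearMap.range (map U₁.subtype U₂.subtype) :=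
  ⟨map (U₁.orthogonalProjectionOnto : E →ₗ[𝕜] U₁) (U₂.orthogonalProjectionOnto : F →ₗ[𝕜] U₂) ζ,
    map_map _ _ _ _ ζ⟩

lemma TensorProduct.mem_range_map_subtype_sup_iff (U₁ : Submodule 𝕜 E)
    [U₁.HasOrthogonalProjection] (U₂ : Submodule 𝕜 F) [U₂.HasOrthogonalProjection]
    (ζ : E ⊗[𝕜] F) :
    ζ ∈ LinearMap.range (map U₁.subtype U₂.subtype) ⊔
        LinearMap.range (map U₁ᗮ.subtype U₂ᗮ.subtype) ↔
      map (U₁.starProjection : E →ₗ[𝕜] E) (U₂ᗮ.starProjection : F →ₗ[𝕜] F) ζ = 0 ∧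
        map (U₁ᗮ.starProjection : E →ₗ[𝕜] E) (U₂.starProjection : F →ₗ[𝕜] F) ζ = 0 := by
  constructor
  · intro hζ
    obtain ⟨_, ⟨a, rfl⟩, _, ⟨b, rfl⟩, rfl⟩ := Submodule.mem_sup.mp hζ
    simp only [map_add, map_map, U₁.starProjection_comp_subtype_orthogonal,
      U₁.starProjection_orthogonal_comp_subtype, U₂.starProjection_comp_subtype_orthogonal,
      U₂.starProjection_orthogonal_comp_subtype, map_zero_left, map_zero_right,
      LinearMap.zero_apply, add_zero, and_self]
  · rintro ⟨h₁₂, h₂₁⟩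
    have hζ : ζ = map (U₁.starProjection : E →ₗ[𝕜] E) (U₂.starProjection : F →ₗ[𝕜] F) ζ +
        map (U₁ᗮ.starProjection : E →ₗ[𝕜] E) (U₂ᗮ.starProjection : F →ₗ[𝕜] F) ζ := by
      conv_lhs => rw [← LinearMap.id_apply (R := 𝕜) ζ, ← map_id,
        ← U₁.starProjection_add_starProjection_orthogonal_eq_id,
        ← U₂.starProjection_add_starProjection_orthogonal_eq_id]
      simp only [map_add_left, map_add_right, LinearMap.add_apply, h₁₂, h₂₁, add_zero]
      abel
    rw [hζ]
    exact Submodule.add_mem_sup (map_starProjection_mem_range_map_subtype U₁ U₂ ζ)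
      (map_starProjection_mem_range_map_subtype U₁ᗮ U₂ᗮ ζ)

end Projections

section Slices

variable {V W : Type*} [NormedAddCommGroup V] [InnerProductSpace ℂ V]
    [NormedAddCommGroup W] [InnerProductSpace ℂ W]

@[simp] lemma sliceL_tmul (u v : V) (w : W) : sliceL u (v ⊗ₜ[ℂ] w) = inner ℂ u v • w := rfl

lemma sliceR_apply (u : W) (η : V ⊗[ℂ] W) : sliceR u η = sliceL u (TensorProduct.comm ℂ V W η) :=
  rfl

lemma equivFinsuppOfBasisLeft_apply_eq_sliceL {ι : Type*} [Fintype ι] [DecidableEq ι]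
    (b : OrthonormalBasis ι ℂ V) (η : V ⊗[ℂ] W) (i : ι) :
    equivFinsuppOfBasisLeft b.toBasis η i = sliceL (b i) η := by
  induction η using TensorProduct.induction_on with
  | zero => simp
  | tmul v w => simp [b.repr_apply_apply]
  | add x y hx hy => simp [hx, hy]

lemma eq_zero_of_forall_sliceL_eq_zero [FiniteDimensional ℂ V] {η : V ⊗[ℂ] W}
    (h : ∀ u, sliceL u η = 0) : η = 0 := by
  let b := stdOrthonormalBasis ℂ V
  apply (equivFinsuppOfBasisLeft b.toBasis).injective
  ext i
  simp [equivFinsuppOfBasisLeft_apply_eq_sliceL, h]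

lemma sliceL_map_of_isSymmetric {W' : Type*} [NormedAddCommGroup W'] [InnerProductSpace ℂ W']
    {A : V →ₗ[ℂ] V} (hA : A.IsSymmetric) (B : W →ₗ[ℂ] W') (u : V) (η : V ⊗[ℂ] W) :
    sliceL u (map A B η) = B (sliceL (A u) η) := by
  induction η using TensorProduct.induction_on with
  | zero => simp
  | tmul v w => simp [hA u v]
  | add x y hx hy => simp [hx, hy]

lemma forall_sliceL_mem_iff [FiniteDimensional ℂ V] (U₁ : Submodule ℂ V)
    (U₂ : Submodule ℂ W) [U₂.HasOrthogonalProjection] (ζ : V ⊗[ℂ] W) :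
    (∀ u ∈ U₁, sliceL u ζ ∈ U₂) ↔
      map (U₁.starProjection : V →ₗ[ℂ] V) (U₂ᗮ.starProjection : W →ₗ[ℂ] W) ζ = 0 := by
  have hslice (u : V) : sliceL u (map (U₁.starProjection : V →ₗ[ℂ] V)
      (U₂ᗮ.starProjection : W →ₗ[ℂ] W) ζ) = U₂ᗮ.starProjection (sliceL (U₁.starProjection u) ζ) :=
    sliceL_map_of_isSymmetric U₁.starProjection_isSymmetric _ u ζ
  constructor
  · intro h
    refine eq_zero_of_forall_sliceL_eq_zero fun u => ?_
    rw [hslice]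
    exact U₂.starProjection_orthogonal_apply_eq_zero (h _ (U₁.starProjection_apply_mem u))
  · intro h u hu
    have hproj : U₂ᗮ.starProjection (sliceL u ζ) = 0 := by
      rw [← U₁.starProjection_eq_self_iff.mpr hu, ← hslice, h, map_zero]
    rwa [Submodule.starProjection_apply_eq_zero_iff, U₂.orthogonal_orthogonal] at hproj

lemma forall_sliceR_mem_iff [FiniteDimensional ℂ W] (U₁ : Submodule ℂ V)
    [U₁.HasOrthogonalProjection] (U₂ : Submodule ℂ W) (ζ : V ⊗[ℂ] W) :
    (∀ u ∈ U₂, sliceR u ζ ∈ U₁) ↔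
      map (U₁ᗮ.starProjection : V →ₗ[ℂ] V) (U₂.starProjection : W →ₗ[ℂ] W) ζ = 0 := by
  simp_rw [sliceR_apply, forall_sliceL_mem_iff, map_comm, LinearEquiv.map_eq_zero_iff]

end Slices

/-- `L_{ū₁}(ζ) ∈ 𝒰₂` for all `u₁ ∈ 𝒰₁` and `L_{ū₂}(ζ) ∈ 𝒰₁` for all
`u₂ ∈ 𝒰₂` iff `ζ ∈ (𝒰₁ ⊗ 𝒰₂) + (𝒰₁^⊥ ⊗ 𝒰₂^⊥)`. -/
theorem stmt9 {V W : Type*} [NormedAddCommGroup V] [InnerProductSpace ℂ V]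
    [FiniteDimensional ℂ V] [NormedAddCommGroup W] [InnerProductSpace ℂ W]
    [FiniteDimensional ℂ W]
    (U₁ : Submodule ℂ V) (U₂ : Submodule ℂ W) (ζ : TensorProduct ℂ V W) :
    ((∀ u₁ ∈ U₁, sliceL u₁ ζ ∈ U₂) ∧ (∀ u₂ ∈ U₂, sliceR u₂ ζ ∈ U₁)) ↔
      ζ ∈ LinearMap.range (TensorProduct.map U₁.subtype U₂.subtype) ⊔
            LinearMap.range (TensorProduct.map U₁ᗮ.subtype U₂ᗮ.subtype) := by
  rw [forall_sliceL_mem_iff, forall_sliceR_mem_iff, mem_range_map_subtype_sup_iff]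
end

section
/- Let X₂, Y₁, X₁, Y₂ be finite sets, N ∈ L(ℂ^{X₂Y₁}, ℂ^{X₁Y₂}) with N = Σ_{p=1}^r A_p ⊗ B_p (A_p ∈ L(ℂ^{X₂}, ℂ^{X₁}), B_p ∈ L(ℂ^{Y₁}, ℂ^{Y₂})), M ∈ L(ℂ^{X₁}, ℂ^{Y₁}), and define N[M] = Σ_{p=1}^r B_p M A_p. Let Γ : M_{X₂Y₁} → M_{X₁Y₂} be Γ(T) = N T N* and ℰ : M_{X₁} → M_{Y₁} be ℰ(S) = M S M*. Then the simulated map Γ[ℰ] : M_{X₂} → M_{Y₂} satisfies Γ[ℰ](S) = N[M] S N[M]* for all S ∈ M_{X₂}; in particular N[M] is well-defined (independent of the decomposition of N). -/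
open Matrix Kronecker

lemma key19 {X₁ X₂ Y₁ Y₂ : Type*} [Fintype X₁] [Fintype X₂] [Fintype Y₁] [Fintype Y₂]
    {r : ℕ} (A : Fin r → Matrix X₁ X₂ ℂ) (B : Fin r → Matrix Y₂ Y₁ ℂ)
    (M : Matrix Y₁ X₁ ℂ) (y₂ : Y₂) (x₂ : X₂) :
    (∑ p, B p * M * A p) y₂ x₂ =
      ∑ x₁, ∑ y₁, (∑ p, (A p) ⊗ₖ (B p)) (x₁, y₂) (x₂, y₁) * M y₁ x₁ := by
  simp only [Matrix.sum_apply, Matrix.mul_apply, kroneckerMap_apply, Finset.sum_mul,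
    Finset.mul_sum]
  rw [Finset.sum_comm]
  congr 1; ext p
  rw [Finset.sum_comm]
  congr 1; ext x₁
  congr 1; ext y₁
  ring

/-- let `N = Σ_p A_p ⊗ B_p : ℂ^{X₂Y₁} → ℂ^{X₁Y₂}` and
`M : ℂ^{X₁} → ℂ^{Y₁}`, and set `N[M] = Σ_p B_p M A_p`. Then `N[M]` is well defined
(independent of the decomposition of `N`), and for `Γ(T) = N T N*`,
`ℰ(S) = M S M*`, the simulated map `Γ[ℰ](S) = Σ_{p,q} (B_p M A_p) S (B_q M A_q)*`
equals `N[M] S N[M]*` for all `S ∈ M_{X₂}`. -/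
theorem stmt19 {X₁ X₂ Y₁ Y₂ : Type*} [Fintype X₁] [Fintype X₂] [Fintype Y₁] [Fintype Y₂]
    {r r' : ℕ}
    (A : Fin r → Matrix X₁ X₂ ℂ) (B : Fin r → Matrix Y₂ Y₁ ℂ)
    (A' : Fin r' → Matrix X₁ X₂ ℂ) (B' : Fin r' → Matrix Y₂ Y₁ ℂ)
    (M : Matrix Y₁ X₁ ℂ) (N : Matrix (X₁ × Y₂) (X₂ × Y₁) ℂ)
    (hN : N = ∑ p, (A p) ⊗ₖ (B p)) (hN' : N = ∑ p, (A' p) ⊗ₖ (B' p)) :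
    (∑ p, B p * M * A p) = (∑ p, B' p * M * A' p) ∧
      ∀ S : Matrix X₂ X₂ ℂ,
        (∑ p, ∑ q, (B p * M * A p) * S * (B q * M * A q)ᴴ) =
          (∑ p, B p * M * A p) * S * (∑ p, B p * M * A p)ᴴ := by
  constructor
  · ext y₂ x₂
    rw [key19, key19, ← hN, ← hN']
  · intro S
    simp only [conjTranspose_sum, Matrix.mul_sum]
    rw [Finset.sum_comm]
    refine Finset.sum_congr rfl fun q _ => ?_
    rw [Matrix.sum_mul, Matrix.sum_mul]
end
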